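/- Let f, g : ℝ → ℂ be 2π-periodic and Lebesgue integrable on [−π, π]. Then the convolution f∗g satisfies ‖f∗g‖_T ≤ ‖f‖_T · ‖g‖_1, where ‖g‖_1 = ∫_{−π}^{π} |g(t)| dt. -/

import Mathlib

open MeasureTheory Real

/-- The Alexiewicz norm of a `2π`-periodic function. -/
noncomputable def alexNorm (f : ℝ → ℂ) : ℝ :=
  sSup {r : ℝ | ∃ α β : ℝ, α ≤ β ∧ β ≤ α + 2 * π ∧
    r = ‖∫ t in α..β, f t‖}

/-- Convolution on the torus. -/
noncomputable def torusConv (f g : ℝ → ℂ) (x : ℝ) : ℂ :=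
  ∫ t in (-π)..π, f (x - t) * g t

/-!
By Fubini, `∫_α^β f∗g = ∫_{-π}^{π} (∫_{α-t}^{β-t} f) g(t) dt`. Each inner integral runs over an
interval of length at most `2π`, so it is bounded by `‖f‖_T`, and integrating against `|g|`
gives the claim.
-/

open Set

theorem Function.Periodic.locallyIntegrable {E : Type*} [NormedAddCommGroup E] {f : ℝ → E}
    {T t : ℝ} (hf : Function.Periodic f T) (hT : T ≠ 0)
    (h : IntervalIntegrable f volume t (t + T)) : LocallyIntegrable f volume := fun x =>
  ⟨Icc (x - 1) (x + 1), Icc_mem_nhds (by linarith) (by linarith),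
    (intervalIntegrable_iff_integrableOn_Icc_of_le (by linarith)).1
      (hf.intervalIntegrable hT h _ _)⟩

theorem integrableOn_uIoc_prod_sub_mul {f g : ℝ → ℂ} (hf : LocallyIntegrable f volume)
    {α β a b : ℝ} (hg : IntervalIntegrable g volume a b) :
    IntegrableOn (fun p : ℝ × ℝ => f (p.1 - p.2) * g p.2) (uIoc α β ×ˢ uIoc a b) := by
  -- On the rectangle the integrand is that of the convolution of two integrable cut-offs.
  set K : Set ℝ := (fun p : ℝ × ℝ => p.1 - p.2) '' (uIcc α β ×ˢ uIcc a b)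
  have hK : IsCompact K := (isCompact_uIcc.prod isCompact_uIcc).image continuous_sub
  have hint : Integrable (fun p : ℝ × ℝ =>
      ContinuousLinearMap.mul ℂ ℂ ((uIoc a b).indicator g p.2) (K.indicator f (p.1 - p.2)))
      (volume.prod volume) :=
    Integrable.convolution_integrand _ (integrable_indicator_iff measurableSet_uIoc |>.2 hg.def')
      ((integrable_indicator_iff hK.measurableSet).2 (hf.integrableOn_isCompact hK))
  refine (Measure.volume_eq_prod ℝ ℝ ▸ hint.integrableOn).congr_fun (fun p hp => ?_)
    (measurableSet_uIoc.prod measurableSet_uIoc)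
  have hsub : p.1 - p.2 ∈ K :=
    mem_image_of_mem _ ⟨uIoc_subset_uIcc hp.1, uIoc_subset_uIcc hp.2⟩
  simp only [ContinuousLinearMap.mul_apply', indicator_of_mem hp.2, indicator_of_mem hsub, mul_comm]

theorem intervalIntegral_torusConv {f g : ℝ → ℂ} (hf : LocallyIntegrable f volume)
    (hg : IntervalIntegrable g volume (-π) π) (α β : ℝ) :
    ∫ x in α..β, torusConv f g x = ∫ t in (-π)..π, (∫ x in (α - t)..(β - t), f x) * g t := by
  simp only [torusConv]
  rw [intervalIntegral_intervalIntegral_swap (F := fun x t => f (x - t) * g t)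
    (integrableOn_uIoc_prod_sub_mul hf hg)]
  simp only [intervalIntegral.integral_mul_const, intervalIntegral.integral_comp_sub_right]

theorem Function.Periodic.norm_intervalIntegral_le {E : Type*} [NormedAddCommGroup E]
    [NormedSpace ℝ E] {f : ℝ → E} {T : ℝ} (hf : Function.Periodic f T)
    (hint : ∀ a b, IntervalIntegrable f volume a b) {α β : ℝ} (hαβ : α ≤ β) (hβ : β ≤ α + T)
    (t : ℝ) : ‖∫ x in α..β, f x‖ ≤ ∫ x in t..t + T, ‖f x‖ :=
  calc ‖∫ x in α..β, f x‖
    _ ≤ ∫ x in α..β, ‖f x‖ := intervalIntegral.norm_integral_le_integral_norm hαβ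
    _ ≤ ∫ x in α..α + T, ‖f x‖ :=
      intervalIntegral.integral_mono_interval le_rfl hαβ hβ
        (Filter.Eventually.of_forall fun _ => norm_nonneg _) (hint _ _).norm
    _ = ∫ x in t..t + T, ‖f x‖ := (hf.comp (‖·‖)).intervalIntegral_add_eq α t

theorem norm_intervalIntegral_le_alexNorm {f : ℝ → ℂ} (hper : Function.Periodic f (2 * π))
    (hint : IntervalIntegrable f volume (-π) π) {α β : ℝ} (hαβ : α ≤ β) (hβ : β ≤ α + 2 * π) :
    ‖∫ t in α..β, f t‖ ≤ alexNorm f := by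
  have hint' : ∀ a b, IntervalIntegrable f volume a b :=
    hper.intervalIntegrable (by positivity) (t := -π) (by rwa [show -π + 2 * π = π by ring])
  refine le_csSup ⟨∫ x in (-π)..-π + 2 * π, ‖f x‖, ?_⟩ ⟨α, β, hαβ, hβ, rfl⟩
  rintro _ ⟨α', β', hαβ', hβ', rfl⟩
  exact hper.norm_intervalIntegral_le hint' hαβ' hβ' _

theorem alexNorm_le {f : ℝ → ℂ} {C : ℝ}
    (h : ∀ α β, α ≤ β → β ≤ α + 2 * π → ‖∫ t in α..β, f t‖ ≤ C) : alexNorm f ≤ C :=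
  csSup_le ⟨_, 0, 0, le_rfl, by positivity, rfl⟩ fun _ ⟨α, β, hαβ, hβ, hr⟩ => hr ▸ h α β hαβ hβ

theorem alexiewicz_norm_convolution_le_general (f g : ℝ → ℂ)
    (hfper : Function.Periodic f (2 * π))
    (hfint : IntervalIntegrable f volume (-π) π)
    (hgint : IntervalIntegrable g volume (-π) π) :
    alexNorm (torusConv f g) ≤ alexNorm f * ∫ t in (-π)..π, ‖g t‖ := by
  have hfloc : LocallyIntegrable f volume :=
    hfper.locallyIntegrable (by positivity) (t := -π) (by rwa [show -π + 2 * π = π by ring])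
  refine alexNorm_le fun α β hαβ hβ => ?_
  rw [intervalIntegral_torusConv hfloc hgint, ← intervalIntegral.integral_const_mul]
  refine intervalIntegral.norm_integral_le_of_norm_le (by linarith [pi_pos])
    (Filter.Eventually.of_forall fun t _ => ?_) (hgint.norm.const_mul _)
  rw [norm_mul]
  gcongr
  exact norm_intervalIntegral_le_alexNorm hfper hfint (by linarith) (by linarith)

/-- `‖f∗g‖_𝕋 ≤ ‖f‖_𝕋 ‖g‖₁` for `2π`-periodic functions
integrable on `[−π, π]`. -/
theorem alexiewicz_norm_convolution_le (f g : ℝ → ℂ)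
    (hfper : Function.Periodic f (2 * π))
    (hfint : IntervalIntegrable f volume (-π) π)
    (hgper : Function.Periodic g (2 * π))
    (hgint : IntervalIntegrable g volume (-π) π) :
    alexNorm (torusConv f g) ≤ alexNorm f * ∫ t in (-π)..π, ‖g t‖ :=
  alexiewicz_norm_convolution_le_general f g hfper hfint hgint
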